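/- arXiv:2604.12235 — 6 statements merged into one kernel-verified Lean document; each statement's English description precedes it below -/
import Mathlib

section
/- If u_{t+1}² ≤ (1 − β_t + (3/2)α_t²L²) u_t² + (β_t + 2β_t²) v² for all t ≥ 0, where α_t² L² = 1/(t+γ), β_t = γ/(t+γ) with γ ≥ 2, and u_0² ≤ 12 v², then u_t² ≤ 12 v² for all t ≥ 0. -/
/-- If `u_{t+1}² ≤ (1 − β_t + (3/2)α_t²L²) u_t² + (β_t + 2β_t²) v²` for all
`t ≥ 0`, where `α_t²L² = 1/(t+γ)`, `β_t = γ/(t+γ)`, `γ ≥ 2`, and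
`u_0² ≤ 12 v²`, then `u_t² ≤ 12 v²` for all `t`. -/
theorem bounded_iterates_recurrence (u : ℕ → ℝ) (v γ : ℝ)
    (hu : ∀ t, 0 ≤ u t) (hv : 0 ≤ v) (hγ : 2 ≤ γ)
    (hrec : ∀ t : ℕ,
      (u (t + 1)) ^ 2 ≤
        (1 - γ / ((t : ℝ) + γ) + (3 / 2) * (1 / ((t : ℝ) + γ))) * (u t) ^ 2 +
          (γ / ((t : ℝ) + γ) + 2 * (γ / ((t : ℝ) + γ)) ^ 2) * v ^ 2)
    (h0 : (u 0) ^ 2 ≤ 12 * v ^ 2) :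
    ∀ t : ℕ, (u t) ^ 2 ≤ 12 * v ^ 2 := by
  intro t
  induction t with
  | zero => exact h0
  | succ t ih =>
    have ht : (0 : ℝ) ≤ (t : ℝ) := Nat.cast_nonneg t
    have hs : (0 : ℝ) < (t : ℝ) + γ := by linarith
    have hrt := hrec t
    have hcoef : 0 ≤ 1 - γ / ((t : ℝ) + γ) + (3 / 2) * (1 / ((t : ℝ) + γ)) := by
      rw [div_add' _ _ _ (ne_of_gt hs)] at *
      have : 1 - γ / ((t : ℝ) + γ) + (3 / 2) * (1 / ((t : ℝ) + γ))
          = ((t : ℝ) + 3 / 2) / ((t : ℝ) + γ) := by field_simp; ring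
      rw [this]
      positivity
    have key : (1 - γ / ((t : ℝ) + γ) + (3 / 2) * (1 / ((t : ℝ) + γ))) * (12 * v ^ 2) +
        (γ / ((t : ℝ) + γ) + 2 * (γ / ((t : ℝ) + γ)) ^ 2) * v ^ 2 ≤ 12 * v ^ 2 := by
      have he : ((t : ℝ) + γ) * (1 / ((t : ℝ) + γ)) = 1 := mul_one_div_cancel hs.ne'
      have he0 : 0 ≤ 1 / ((t : ℝ) + γ) := by positivity
      have hb : γ / ((t : ℝ) + γ) = γ * (1 / ((t : ℝ) + γ)) := by ring
      have hb1 : γ * (1 / ((t : ℝ) + γ)) ≤ 1 := by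
        rw [← hb, div_le_one hs]; linarith
      have hv2 : 0 ≤ v ^ 2 := sq_nonneg v
      rw [hb]
      nlinarith [mul_nonneg hv2 he0, mul_nonneg (mul_nonneg hv2 he0) he0,
        mul_nonneg hv2 (mul_nonneg he0 he0), sq_nonneg (γ * (1 / ((t : ℝ) + γ))),
        mul_le_of_le_one_right (mul_nonneg hv2 he0) hb1,
        mul_nonneg (mul_nonneg hv2 he0) (sub_nonneg.2 hb1)]
    calc (u (t + 1)) ^ 2 ≤ _ := hrt
      _ ≤ (1 - γ / ((t : ℝ) + γ) + (3 / 2) * (1 / ((t : ℝ) + γ))) * (12 * v ^ 2) +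
          (γ / ((t : ℝ) + γ) + 2 * (γ / ((t : ℝ) + γ)) ^ 2) * v ^ 2 := by
        gcongr
      _ ≤ 12 * v ^ 2 := key
end

section
/- For γ ≥ 2 and all integers t ≥ 0, setting s := t + 1 + γ, λ_t := √(1 − 1/s) − γ/s, and q_t := √(λ_t² + 1/s), one has q_t ≤ 1 − 9/(8s). -/
/-- For `γ ≥ 2` and integers `t ≥ 0`, setting `s := t + 1 + γ`,
`λ_t := √(1 − 1/s) − γ/s` and `q_t := √(λ_t² + 1/s)`, one has
`q_t ≤ 1 − 9/(8s)`. -/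
theorem q_bound (γ : ℝ) (hγ : 2 ≤ γ) (t : ℕ) :
    Real.sqrt ((Real.sqrt (1 - 1 / ((t : ℝ) + 1 + γ)) - γ / ((t : ℝ) + 1 + γ)) ^ 2 +
        1 / ((t : ℝ) + 1 + γ)) ≤
      1 - 9 / (8 * ((t : ℝ) + 1 + γ)) := by
  set s : ℝ := (t : ℝ) + 1 + γ with hs_def
  have ht : (0:ℝ) ≤ (t:ℝ) := Nat.cast_nonneg t
  have hs3 : 3 ≤ s := by simp [hs_def]; linarith
  have hsγ : γ + 1 ≤ s := by simp [hs_def]; linarith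
  have hs0 : (0:ℝ) < s := by linarith
  have hinv : 1 / s ≤ 1 / 3 := by
    apply div_le_div_of_nonneg_left <;> linarith
  have hinv0 : 0 < 1 / s := by positivity
  -- upper bound on sqrt(1 - 1/s)
  have hub : Real.sqrt (1 - 1 / s) ≤ 1 - 1 / (2 * s) := by
    have h1 : 1 - 1 / s ≤ (1 - 1 / (2 * s)) ^ 2 := by
      have e : (1 - 1 / (2 * s)) ^ 2 - (1 - 1 / s) = 1 / (4 * s ^ 2) := by
        field_simp; ring
      have : (0:ℝ) ≤ 1 / (4 * s ^ 2) := by positivity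
      linarith
    calc Real.sqrt (1 - 1 / s) ≤ Real.sqrt ((1 - 1 / (2 * s)) ^ 2) :=
          Real.sqrt_le_sqrt h1
      _ = 1 - 1 / (2 * s) := by
          rw [Real.sqrt_sq]
          have : 1 / (2 * s) ≤ 1 / 6 := by
            apply div_le_div_of_nonneg_left <;> linarith
          linarith
  -- lower bound: λ ≥ 0
  have hlb : γ / s ≤ Real.sqrt (1 - 1 / s) := by
    have h1s : (0:ℝ) ≤ 1 - 1 / s := by linarith
    have hsq : (γ / s) ^ 2 ≤ 1 - 1 / s := by
      rw [div_pow, div_le_iff₀ (by positivity)]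
      have : γ ^ 2 ≤ s ^ 2 - s := by nlinarith
      have hfield : (1 - 1 / s) * s ^ 2 = s ^ 2 - s := by field_simp
      rw [hfield]; exact this
    calc γ / s = Real.sqrt ((γ / s) ^ 2) := (Real.sqrt_sq (by positivity)).symm
      _ ≤ Real.sqrt (1 - 1 / s) := Real.sqrt_le_sqrt hsq
  set lam : ℝ := Real.sqrt (1 - 1 / s) - γ / s with hlam
  have hlam0 : 0 ≤ lam := by simp only [hlam]; linarith
  have hlamub : lam ≤ 1 - (γ + 1 / 2) / s := by
    have : (γ + 1 / 2) / s = γ / s + 1 / (2 * s) := by field_simp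
    rw [this]; simp only [hlam]; linarith
  have hrhs : 0 ≤ 1 - 9 / (8 * s) := by
    have : 9 / (8 * s) ≤ 9 / 24 := by
      apply div_le_div_of_nonneg_left <;> linarith
    linarith
  have hkey : lam ^ 2 + 1 / s ≤ (1 - 9 / (8 * s)) ^ 2 := by
    have h2 : lam ^ 2 ≤ (1 - (γ + 1 / 2) / s) ^ 2 := by
      apply sq_le_sq' <;> nlinarith [div_nonneg (by linarith : (0:ℝ) ≤ γ + 1/2) hs0.le]
    have h3 : (1 - (γ + 1 / 2) / s) ^ 2 + 1 / s ≤ (1 - 9 / (8 * s)) ^ 2 := by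
      have key2 : 0 ≤ s * (2 * γ - 9/4) + 81/64 - (γ + 1/2) ^ 2 := by
        nlinarith [mul_le_mul_of_nonneg_right hsγ (by linarith : (0:ℝ) ≤ 2*γ - 9/4),
          sq_nonneg (γ - 2)]
      have e : (1 - 9 / (8 * s)) ^ 2 - ((1 - (γ + 1 / 2) / s) ^ 2 + 1 / s) =
          (s * (2 * γ - 9/4) + 81/64 - (γ + 1/2) ^ 2) / s ^ 2 := by
        field_simp; ring
      have hnn := div_nonneg key2 (sq_nonneg s)
      linarith
    linarith
  calc Real.sqrt (lam ^ 2 + 1 / s) ≤ Real.sqrt ((1 - 9 / (8 * s)) ^ 2) :=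
        Real.sqrt_le_sqrt hkey
    _ = 1 - 9 / (8 * s) := Real.sqrt_sq hrhs
end

section
/- Suppose a sequence of nonnegative reals (δ_t) satisfies δ_{t+1} ≤ (1 − 9/(8(t+1+γ))) δ_t + γD/(t+γ)² for all t ≥ 0, where γ ≥ 2, D ≥ 0, and δ_0 ≤ E/γ with E := max{γ δ_0, 12γD}. Then δ_t ≤ E/(t+γ) for all t ≥ 0. -/
/-- If a sequence of nonnegative reals `(δ_t)` satisfies
`δ_{t+1} ≤ (1 − 9/(8(t+1+γ))) δ_t + γD/(t+γ)²` for all `t ≥ 0`, with `γ ≥ 2`,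
`D ≥ 0`, `E := max (γ δ₀) (12γD)` and `δ₀ ≤ E/γ`, then `δ_t ≤ E/(t+γ)`
for all `t ≥ 0`. -/
theorem difference_decay (δ : ℕ → ℝ) (γ D : ℝ) (hγ : 2 ≤ γ) (hD : 0 ≤ D)
    (hδ : ∀ t, 0 ≤ δ t)
    (hrec : ∀ t : ℕ,
      δ (t + 1) ≤ (1 - 9 / (8 * ((t : ℝ) + 1 + γ))) * δ t + γ * D / ((t : ℝ) + γ) ^ 2)
    (h0 : δ 0 ≤ max (γ * δ 0) (12 * γ * D) / γ) :
    ∀ t : ℕ, δ t ≤ max (γ * δ 0) (12 * γ * D) / ((t : ℝ) + γ) := by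
  set E := max (γ * δ 0) (12 * γ * D) with hE
  have hE0 : 0 ≤ E := le_trans (by positivity) (le_max_right (γ * δ 0) (12 * γ * D))
  have hD' : γ * D ≤ E / 12 := by
    have := le_max_right (γ * δ 0) (12 * γ * D)
    linarith
  intro t
  induction t with
  | zero => simpa using h0
  | succ t ih =>
    have ht : (0:ℝ) ≤ (t:ℝ) := Nat.cast_nonneg t
    have hr : (2:ℝ) ≤ (t:ℝ) + γ := by linarith
    have hr0 : (0:ℝ) < (t:ℝ) + γ := by linarith
    have hr1 : (0:ℝ) < (t:ℝ) + 1 + γ := by linarith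
    have hfac : (0:ℝ) ≤ 1 - 9 / (8 * ((t:ℝ) + 1 + γ)) := by
      rw [sub_nonneg, div_le_one (by linarith)]
      linarith
    have step : δ (t + 1) ≤ (1 - 9 / (8 * ((t:ℝ) + 1 + γ))) * (E / ((t:ℝ) + γ))
        + γ * D / ((t:ℝ) + γ) ^ 2 := by
      have h1 := hrec t
      have h2 : (1 - 9 / (8 * ((t:ℝ) + 1 + γ))) * δ t
          ≤ (1 - 9 / (8 * ((t:ℝ) + 1 + γ))) * (E / ((t:ℝ) + γ)) :=
        mul_le_mul_of_nonneg_left ih hfac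
      linarith
    have key : (1 - 9 / (8 * ((t:ℝ) + 1 + γ))) * (E / ((t:ℝ) + γ))
        + γ * D / ((t:ℝ) + γ) ^ 2 ≤ E / ((t:ℝ) + 1 + γ) := by
      have hgd : γ * D / ((t:ℝ) + γ) ^ 2 ≤ E / 12 / ((t:ℝ) + γ) ^ 2 :=
        div_le_div_of_nonneg_right hD' (by positivity) |>.trans_eq rfl
      have hid : E / ((t:ℝ) + 1 + γ)
          - ((1 - 9 / (8 * ((t:ℝ) + 1 + γ))) * (E / ((t:ℝ) + γ))
            + E / 12 / ((t:ℝ) + γ) ^ 2)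
          = E * ((t:ℝ) + γ - 2) / (24 * ((t:ℝ) + γ) ^ 2 * ((t:ℝ) + 1 + γ)) := by
        field_simp
        ring
      have hnn : 0 ≤ E * ((t:ℝ) + γ - 2) / (24 * ((t:ℝ) + γ) ^ 2 * ((t:ℝ) + 1 + γ)) :=
        div_nonneg (mul_nonneg hE0 (by linarith)) (by positivity)
      linarith
    calc δ (t + 1) ≤ E / ((t:ℝ) + 1 + γ) := le_trans step key
      _ = E / (((t+1 : ℕ) : ℝ) + γ) := by push_cast; ring_nf
end

section
/- (Bounded iterates for P-AGD) Let F be monotone and L-Lipschitz, A maximally monotone, z* a zero of F + A, and let z_{t+1} = J_{α_t A}((1−β_t)z_t + β_t z_0 − α_t F(z_t)) with α_t = 1/(L√(t+γ)), β_t = γ/(t+γ), γ ≥ 2. Then ‖z_t − z*‖² ≤ 12‖z_0 − z*‖² for all t ≥ 0, and consequently ‖z_t − z_0‖ ≤ (√12 + 1)‖z_0 − z*‖. -/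
open RealInnerProductSpace

def IsMonotoneOp {d : ℕ}
    (A : EuclideanSpace ℝ (Fin d) → Set (EuclideanSpace ℝ (Fin d))) : Prop :=
  ∀ x y u v, u ∈ A x → v ∈ A y → (0 : ℝ) ≤ ⟪u - v, x - y⟫

def IsMaximallyMonotone {d : ℕ}
    (A : EuclideanSpace ℝ (Fin d) → Set (EuclideanSpace ℝ (Fin d))) : Prop :=
  IsMonotoneOp A ∧ ∀ B, IsMonotoneOp B → (∀ x, A x ⊆ B x) → B = A

/-!
Write `e_t = z_t - z⋆`. Testing the resolvent inclusion defining `z_{t+1}` against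
`-F z⋆ ∈ A z⋆`, and using monotonicity and the Lipschitz bound of `F`, gives
`‖e_{t+1}‖² ≤ (1-β_t)‖e_t‖² + β_t‖e_0‖² - (1-β_t)‖e_t - e_{t+1}‖² + 2α_tL‖e_t‖‖e_t - e_{t+1}‖`.
Since `1 - β_t = t (α_t L)²`, Young's inequality turns this into
`‖e_{t+1}‖² ≤ (1 - β_t + 1/t)‖e_t‖² + β_t‖e_0‖²` for `t ≥ 1`, while `β_0 = 1` gives
`‖e_1‖² ≤ (1 + 1/γ)‖e_0‖²`. For `t ≥ 3` and `γ ≥ 2` the pull `β_t (C - 1)` of the anchor beats the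
growth `C / t` once `C = 6`, so `‖e_t‖² ≤ 6‖e_0‖²` for all `t`; the bound on `‖z_t - z_0‖` follows
by the triangle inequality.
-/

section AnchoredStep

variable {E : Type*} [NormedAddCommGroup E] [InnerProductSpace ℝ E]

lemma norm_sq_le_of_anchored_step {e e₀ e' g : E} {a b L : ℝ} (ha : 0 ≤ a)
    (hg : 0 ≤ ⟪g, e⟫) (hgL : ‖g‖ ≤ L * ‖e‖)
    (h : 0 ≤ ⟪(1 - b) • e + b • e₀ - a • g - e', e'⟫) :
    ‖e'‖ ^ 2 ≤ (1 - b) * ‖e‖ ^ 2 + b * ‖e₀‖ ^ 2 - (1 - b) * ‖e - e'‖ ^ 2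
      - b * ‖e₀ - e'‖ ^ 2 + 2 * (a * L) * ‖e‖ * ‖e - e'‖ := by
  have hsplit : (1 - b) • e + b • e₀ - a • g - e'
      = (1 - b) • (e - e') + b • (e₀ - e') - a • g := by
    module
  have polar : ∀ x : E, ⟪x - e', e'⟫ = (‖x‖ ^ 2 - ‖x - e'‖ ^ 2 - ‖e'‖ ^ 2) / 2 := fun x => by
    rw [← real_inner_self_eq_norm_sq, ← real_inner_self_eq_norm_sq, ← real_inner_self_eq_norm_sq]
    simp only [inner_sub_left, inner_sub_right, real_inner_comm x e']
    ring
  have hcross : ⟪g, e - e'⟫ ≤ L * ‖e‖ * ‖e - e'‖ :=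
    (real_inner_le_norm g _).trans (mul_le_mul_of_nonneg_right hgL (norm_nonneg _))
  have hge' : -(L * ‖e‖ * ‖e - e'‖) ≤ ⟪g, e'⟫ := by
    rw [inner_sub_right] at hcross
    linarith
  rw [hsplit, inner_sub_left, inner_add_left, real_inner_smul_left, real_inner_smul_left,
    real_inner_smul_left, polar, polar] at h
  nlinarith [mul_le_mul_of_nonneg_left hge' ha]

lemma norm_sq_le_of_anchored_step_of_pos {e e₀ e' g : E} {a b L t : ℝ} (ha : 0 ≤ a)
    (hb : 0 ≤ b) (ht : 0 < t) (hbt : 1 - b = t * (a * L) ^ 2)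
    (hg : 0 ≤ ⟪g, e⟫) (hgL : ‖g‖ ≤ L * ‖e‖)
    (h : 0 ≤ ⟪(1 - b) • e + b • e₀ - a • g - e', e'⟫) :
    ‖e'‖ ^ 2 ≤ (1 - b + 1 / t) * ‖e‖ ^ 2 + b * ‖e₀‖ ^ 2 := by
  have key := norm_sq_le_of_anchored_step ha hg hgL h
  have young : 2 * (a * L) * ‖e‖ * ‖e - e'‖ ≤ t * (a * L) ^ 2 * ‖e - e'‖ ^ 2 + 1 / t * ‖e‖ ^ 2 := by
    have : 0 ≤ (t * (a * L) * ‖e - e'‖ - ‖e‖) ^ 2 / t := by positivity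
    have hid : (t * (a * L) * ‖e - e'‖ - ‖e‖) ^ 2 / t
        = t * (a * L) ^ 2 * ‖e - e'‖ ^ 2 + 1 / t * ‖e‖ ^ 2 - 2 * (a * L) * ‖e‖ * ‖e - e'‖ := by
      field_simp
      ring
    linarith
  rw [hbt] at key ⊢
  linarith [mul_nonneg hb (sq_nonneg ‖e₀ - e'‖)]

lemma norm_sq_le_of_anchored_step_self {e₀ e' g : E} {a L : ℝ} (ha : 0 ≤ a)
    (hg : 0 ≤ ⟪g, e₀⟫) (hgL : ‖g‖ ≤ L * ‖e₀‖) (h : 0 ≤ ⟪e₀ - a • g - e', e'⟫) :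
    ‖e'‖ ^ 2 ≤ (1 + (a * L) ^ 2) * ‖e₀‖ ^ 2 := by
  have key := norm_sq_le_of_anchored_step (b := 1) ha hg hgL (by simpa using h)
  nlinarith [sq_nonneg (a * L * ‖e₀‖ - ‖e₀ - e'‖)]

end AnchoredStep

lemma IsMonotoneOp.inner_resolvent_nonneg {d : ℕ}
    {A : EuclideanSpace ℝ (Fin d) → Set (EuclideanSpace ℝ (Fin d))} (hA : IsMonotoneOp A)
    {J : EuclideanSpace ℝ (Fin d) → EuclideanSpace ℝ (Fin d)} {α : ℝ} (hα : 0 < α)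
    (hJ : ∀ w z, J w = z ↔ α⁻¹ • (w - z) ∈ A z) {x u : EuclideanSpace ℝ (Fin d)}
    (hu : u ∈ A x) (w : EuclideanSpace ℝ (Fin d)) :
    0 ≤ ⟪w - J w - α • u, J w - x⟫ := by
  have hmem : α⁻¹ • (w - J w) ∈ A (J w) := (hJ w (J w)).mp rfl
  have hscale : w - J w - α • u = α • (α⁻¹ • (w - J w) - u) := by
    rw [smul_sub, smul_inv_smul₀ hα.ne']
  rw [hscale, real_inner_smul_left]
  exact mul_nonneg hα.le (hA _ _ _ _ hmem hu)

lemma IsMonotoneOp.inner_anchored_step_nonneg {d : ℕ}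
    {A : EuclideanSpace ℝ (Fin d) → Set (EuclideanSpace ℝ (Fin d))} (hA : IsMonotoneOp A)
    {J : EuclideanSpace ℝ (Fin d) → EuclideanSpace ℝ (Fin d)} {α : ℝ} (hα : 0 < α)
    (hJ : ∀ w z, J w = z ↔ α⁻¹ • (w - z) ∈ A z)
    {F : EuclideanSpace ℝ (Fin d) → EuclideanSpace ℝ (Fin d)} {zs : EuclideanSpace ℝ (Fin d)}
    (hzs : -F zs ∈ A zs) (x x₀ : EuclideanSpace ℝ (Fin d)) (β : ℝ) :
    let x' := J ((1 - β) • x + β • x₀ - α • F x)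
    0 ≤ ⟪(1 - β) • (x - zs) + β • (x₀ - zs) - α • (F x - F zs) - (x' - zs), x' - zs⟫ := by
  convert hA.inner_resolvent_nonneg hα hJ hzs ((1 - β) • x + β • x₀ - α • F x) using 2
  module

lemma le_six_mul_of_anchored_recursion {γ D : ℝ} (hγ : 2 ≤ γ) (hD : 0 ≤ D) {E : ℕ → ℝ}
    (h0 : E 0 ≤ D) (h1 : E 1 ≤ 3 / 2 * D)
    (hrec : ∀ t : ℕ, 1 ≤ t →
      E (t + 1) ≤ (1 - γ / (t + γ) + 1 / t) * E t + γ / (t + γ) * D) (t : ℕ) :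
    E t ≤ 6 * D := by
  have step : ∀ t : ℕ, 1 ≤ t → ∀ C, E t ≤ C * D →
      E (t + 1) ≤ ((1 + 1 / t) * C - γ / (t + γ) * (C - 1)) * D := by
    intro t ht C hC
    have hβ : γ / (t + γ) ≤ 1 := (div_le_one (by positivity)).mpr (by simp)
    have ht' : 0 ≤ 1 / (t : ℝ) := by positivity
    have := mul_le_mul_of_nonneg_left hC (show 0 ≤ 1 - γ / (t + γ) + 1 / t by linarith)
    linarith [hrec t ht]
  have hβ_nonneg : ∀ t : ℕ, 0 ≤ γ / (t + γ) := fun t => by positivity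
  have h2 : E 2 ≤ 3 * D := by
    have := step 1 le_rfl _ h1
    norm_num at this
    nlinarith [hβ_nonneg 1]
  have h3 : E 3 ≤ 6 * D := by
    have := step 2 (by norm_num) _ h2
    norm_num at this
    nlinarith [hβ_nonneg 2]
  have invariant : ∀ t : ℕ, 3 ≤ t → E t ≤ 6 * D → E (t + 1) ≤ 6 * D := by
    intro t ht hE
    have htR : (3 : ℝ) ≤ t := by exact_mod_cast ht
    have hcoef : 6 / (t : ℝ) ≤ 5 * (γ / (t + γ)) := by
      rw [div_le_iff₀ (by positivity), mul_div_assoc', div_mul_eq_mul_div,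
        le_div_iff₀ (by positivity)]
      nlinarith
    have hsix : (1 + 1 / (t : ℝ)) * 6 - γ / (t + γ) * (6 - 1) ≤ 6 := by
      rw [show (1 + 1 / (t : ℝ)) * 6 = 6 + 6 / t by ring]
      linarith
    exact (step t (by omega) 6 hE).trans (mul_le_mul_of_nonneg_right hsix hD)
  induction t with
  | zero => linarith
  | succ n ih =>
    match n, ih with
    | 0, _ => linarith
    | 1, _ => linarith
    | 2, _ => exact h3
    | m + 3, ih => exact invariant (m + 3) (by omega) ih

lemma stepsize_mul_sq {L T : ℝ} (hL : 0 < L) (hT : 0 < T) :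
    (1 / (L * √T) * L) ^ 2 = 1 / T := by
  rw [one_div_mul_eq_div, div_mul_cancel_left₀ hL.ne', inv_pow, Real.sq_sqrt hT.le, one_div]

lemma norm_sub_le_of_norm_sub_sq_le {E : Type*} [SeminormedAddCommGroup E] {x y z : E} {C : ℝ}
    (hC : 0 ≤ C) (h : ‖x - z‖ ^ 2 ≤ C * ‖y - z‖ ^ 2) :
    ‖x - y‖ ≤ (√C + 1) * ‖y - z‖ := by
  have hxz : ‖x - z‖ ≤ √C * ‖y - z‖ := by
    rw [← Real.sqrt_sq (norm_nonneg (x - z)), ← Real.sqrt_sq (norm_nonneg (y - z)),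
      ← Real.sqrt_mul hC]
    exact Real.sqrt_le_sqrt h
  have htri := norm_sub_le_norm_sub_add_norm_sub x z y
  rw [norm_sub_rev z y] at htri
  linarith

/-- Bounded iterates for P-AGD: with `F` monotone and `L`-Lipschitz, `A`
maximally monotone, `z⋆` a zero of `F + A`, step sizes `α_t = 1/(L√(t+γ))`,
`β_t = γ/(t+γ)`, `γ ≥ 2`, and
`z_{t+1} = J_{α_t A}((1−β_t)z_t + β_t z₀ − α_t F z_t)`, one has
`‖z_t − z⋆‖² ≤ 12‖z₀ − z⋆‖²` and `‖z_t − z₀‖ ≤ (√12 + 1)‖z₀ − z⋆‖`. -/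
theorem bounded_iterates {d : ℕ}
    (F : EuclideanSpace ℝ (Fin d) → EuclideanSpace ℝ (Fin d))
    (A : EuclideanSpace ℝ (Fin d) → Set (EuclideanSpace ℝ (Fin d)))
    (L γ : ℝ) (hL : 0 < L) (hγ : 2 ≤ γ)
    (hmono : ∀ z w, (0 : ℝ) ≤ ⟪F z - F w, z - w⟫)
    (hlip : ∀ z w, ‖F z - F w‖ ≤ L * ‖z - w‖)
    (hA : IsMaximallyMonotone A)
    (J : ℝ → EuclideanSpace ℝ (Fin d) → EuclideanSpace ℝ (Fin d))
    (hJ : ∀ α, 0 < α → ∀ w z, J α w = z ↔ α⁻¹ • (w - z) ∈ A z)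
    (α β : ℕ → ℝ)
    (hα : ∀ t : ℕ, α t = 1 / (L * Real.sqrt ((t : ℝ) + γ)))
    (hβ : ∀ t : ℕ, β t = γ / ((t : ℝ) + γ))
    (zs : EuclideanSpace ℝ (Fin d)) (hzs : -F zs ∈ A zs)
    (z : ℕ → EuclideanSpace ℝ (Fin d))
    (hz : ∀ t : ℕ, z (t + 1) =
      J (α t) ((1 - β t) • z t + β t • z 0 - α t • F (z t))) :
    ∀ t : ℕ, ‖z t - zs‖ ^ 2 ≤ 12 * ‖z 0 - zs‖ ^ 2 ∧
      ‖z t - z 0‖ ≤ (Real.sqrt 12 + 1) * ‖z 0 - zs‖ := by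
  have hT : ∀ t : ℕ, 0 < (t : ℝ) + γ := fun t => by positivity
  have hαpos : ∀ t, 0 < α t := fun t => by rw [hα]; positivity
  have hαL : ∀ t : ℕ, (α t * L) ^ 2 = 1 / (t + γ) := fun t => by
    rw [hα, stepsize_mul_sq hL (hT t)]
  have anchored : ∀ t, 0 ≤ ⟪(1 - β t) • (z t - zs) + β t • (z 0 - zs)
      - α t • (F (z t) - F zs) - (z (t + 1) - zs), z (t + 1) - zs⟫ := fun t => by
    rw [hz t]
    exact hA.1.inner_anchored_step_nonneg (hαpos t) (hJ _ (hαpos t)) hzs _ _ _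
  have hrec : ∀ t : ℕ, 1 ≤ t → ‖z (t + 1) - zs‖ ^ 2
      ≤ (1 - γ / (t + γ) + 1 / t) * ‖z t - zs‖ ^ 2 + γ / (t + γ) * ‖z 0 - zs‖ ^ 2 :=
    fun t ht => by
      rw [← hβ]
      refine norm_sq_le_of_anchored_step_of_pos (hαpos t).le (by rw [hβ]; positivity)
        (by exact_mod_cast ht) ?_ (hmono _ _) (hlip _ _) (anchored t)
      rw [hαL, hβ]
      field_simp
      ring
  have h1 : ‖z 1 - zs‖ ^ 2 ≤ 3 / 2 * ‖z 0 - zs‖ ^ 2 := by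
    have hβ0 : β 0 = 1 := by rw [hβ]; simp [show γ ≠ 0 by linarith]
    have := norm_sq_le_of_anchored_step_self (hαpos 0).le (hmono _ _) (hlip _ _)
      (by simpa [hβ0] using anchored 0)
    have hs : (α 0 * L) ^ 2 ≤ 1 / 2 := by
      rw [hαL, Nat.cast_zero, zero_add]
      exact one_div_le_one_div_of_le (by norm_num) hγ
    exact this.trans (mul_le_mul_of_nonneg_right (by linarith) (sq_nonneg _))
  have hbound := le_six_mul_of_anchored_recursion (E := fun t => ‖z t - zs‖ ^ 2) hγ
    (sq_nonneg _) le_rfl h1 hrec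
  have h12 : ∀ t, ‖z t - zs‖ ^ 2 ≤ 12 * ‖z 0 - zs‖ ^ 2 := fun t => by
    linarith [hbound t, sq_nonneg ‖z 0 - zs‖]
  exact fun t => ⟨h12 t, norm_sub_le_of_norm_sub_sq_le (by norm_num) (h12 t)⟩
end

section
/- (One-step recursion for differences) Under P-AGD with d_t := z_{t+1} − z_t, λ_t := α_{t+1}/α_t − β_{t+1} ≥ 0, ε_t := β_{t+1} − (α_{t+1}/α_t)β_t, and q_t := √(λ_t² + α_{t+1}² L²), and assuming ‖z_0 − z_t‖ ≤ D for all t, one has ‖d_{t+1}‖ ≤ q_t‖d_t‖ + |ε_t| D for every t ≥ 0. -/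
open RealInnerProductSpace

set_option maxHeartbeats 1000000 in
/-- One-step recursion for differences under P-AGD: with `d_t := z_{t+1} − z_t`,
`λ_t := α_{t+1}/α_t − β_{t+1}`, `ε_t := β_{t+1} − (α_{t+1}/α_t)β_t`,
`q_t := √(λ_t² + α_{t+1}²L²)`, and `‖z₀ − z_t‖ ≤ D` for all `t`, one has
`‖d_{t+1}‖ ≤ q_t‖d_t‖ + |ε_t| D`. -/
theorem one_step_recursion {d : ℕ}
    (F : EuclideanSpace ℝ (Fin d) → EuclideanSpace ℝ (Fin d))
    (A : EuclideanSpace ℝ (Fin d) → Set (EuclideanSpace ℝ (Fin d)))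
    (L γ D : ℝ) (hL : 0 < L) (hγ : 2 ≤ γ)
    (hmono : ∀ z w, (0 : ℝ) ≤ ⟪F z - F w, z - w⟫)
    (hlip : ∀ z w, ‖F z - F w‖ ≤ L * ‖z - w‖)
    (hA : IsMaximallyMonotone A)
    (J : ℝ → EuclideanSpace ℝ (Fin d) → EuclideanSpace ℝ (Fin d))
    (hJ : ∀ α, 0 < α → ∀ w z, J α w = z ↔ α⁻¹ • (w - z) ∈ A z)
    (α β : ℕ → ℝ)
    (hα : ∀ t : ℕ, α t = 1 / (L * Real.sqrt ((t : ℝ) + γ)))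
    (hβ : ∀ t : ℕ, β t = γ / ((t : ℝ) + γ))
    (z : ℕ → EuclideanSpace ℝ (Fin d))
    (hz : ∀ t : ℕ, z (t + 1) =
      J (α t) ((1 - β t) • z t + β t • z 0 - α t • F (z t)))
    (hD : ∀ t : ℕ, ‖z 0 - z t‖ ≤ D) :
    ∀ t : ℕ,
      ‖z (t + 2) - z (t + 1)‖ ≤
        Real.sqrt ((α (t + 1) / α t - β (t + 1)) ^ 2 + (α (t + 1)) ^ 2 * L ^ 2) *
            ‖z (t + 1) - z t‖ +
          |β (t + 1) - (α (t + 1) / α t) * β t| * D := by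
  intro t
  have hD0 : (0:ℝ) ≤ D := le_trans (by simp) (hD 0)
  have hγ0 : (0:ℝ) < γ := by linarith
  set s : ℝ := (t : ℝ) + γ with hs_def
  have hs : (0:ℝ) < s := add_pos_of_nonneg_of_pos (Nat.cast_nonneg t) hγ0
  have hs1 : (0:ℝ) < s + 1 := by linarith
  have hrt0 : 0 < Real.sqrt s := Real.sqrt_pos.mpr hs
  have hrt1 : 0 < Real.sqrt (s+1) := Real.sqrt_pos.mpr hs1
  have harg : ((t+1 : ℕ) : ℝ) + γ = s + 1 := by push_cast; ring
  have hαt : α t = 1/(L * Real.sqrt s) := hα t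
  have hαt1 : α (t+1) = 1/(L * Real.sqrt (s+1)) := by rw [hα, harg]
  have ha : 0 < α t := by rw [hαt]; positivity
  have ha1 : 0 < α (t+1) := by rw [hαt1]; positivity
  have hr : α (t+1) / α t = Real.sqrt s / Real.sqrt (s+1) := by
    rw [hαt, hαt1]
    field_simp
  set dt := z (t+1) - z t with hdt
  set d' := z (t+2) - z (t+1) with hd'
  set lam := α (t+1)/α t - β (t+1) with hlam
  set eps := β (t+1) - (α (t+1)/α t) * β t with heps
  set ΔF := F (z (t+1)) - F (z t) with hΔF
  have hγs : γ ≤ Real.sqrt s * Real.sqrt (s+1) := by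
    have h1 : Real.sqrt γ ≤ Real.sqrt s := Real.sqrt_le_sqrt (by
      have := (Nat.cast_nonneg t : (0:ℝ) ≤ t); linarith)
    have h2 : Real.sqrt γ ≤ Real.sqrt (s+1) := Real.sqrt_le_sqrt (by
      have := (Nat.cast_nonneg t : (0:ℝ) ≤ t); linarith)
    have h3 : Real.sqrt γ * Real.sqrt γ = γ := Real.mul_self_sqrt hγ0.le
    nlinarith [Real.sqrt_nonneg γ]
  have hlam0 : 0 ≤ lam := by
    rw [hlam, hr, hβ, harg, sub_nonneg, div_le_div_iff₀ hs1 hrt1]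
    have hss : Real.sqrt (s+1) * Real.sqrt (s+1) = s + 1 := Real.mul_self_sqrt hs1.le
    nlinarith [mul_le_mul_of_nonneg_right hγs hrt1.le]
  set w1 := (1 - β t) • z t + β t • z 0 - α t • F (z t) with hw1
  set w2 := (1 - β (t+1)) • z (t+1) + β (t+1) • z 0 - α (t+1) • F (z (t+1)) with hw2
  have hc1 : (α t)⁻¹ • (w1 - z (t+1)) ∈ A (z (t+1)) := (hJ _ ha _ _).mp (hz t).symm
  have hc2 : (α (t+1))⁻¹ • (w2 - z (t+2)) ∈ A (z (t+2)) := (hJ _ ha1 _ _).mp (hz (t+1)).symm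
  set c1 := (α t)⁻¹ • (w1 - z (t+1)) with hc1d
  set c2 := (α (t+1))⁻¹ • (w2 - z (t+2)) with hc2d
  have hmonoA : (0:ℝ) ≤ ⟪c2 - c1, d'⟫ := hA.1 (z (t+2)) (z (t+1)) c2 c1 hc2 hc1
  have hexp : d' + α (t+1) • (c2 - c1) = lam • dt - α (t+1) • ΔF + eps • (z 0 - z t) := by
    have h1 : α (t+1) • c2 = w2 - z (t+2) := smul_inv_smul₀ ha1.ne' _
    have h2 : α (t+1) • c1 = (α (t+1) * (α t)⁻¹) • (w1 - z (t+1)) := smul_smul _ _ _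
    rw [smul_sub, h1, h2, hw1, hw2, hd', hdt, hΔF, hlam, heps, div_eq_mul_inv]
    match_scalars <;> field_simp <;> ring
  have hF : (0:ℝ) ≤ ⟪dt, ΔF⟫ := by
    rw [real_inner_comm]; exact hmono (z (t+1)) (z t)
  have hq : ‖lam • dt - α (t+1) • ΔF‖ ≤ Real.sqrt (lam^2 + (α (t+1))^2 * L^2) * ‖dt‖ := by
    have h1 : ‖lam • dt‖ = lam * ‖dt‖ := by
      rw [norm_smul, Real.norm_eq_abs, abs_of_nonneg hlam0]
    have h2 : ‖α (t+1) • ΔF‖ = α (t+1) * ‖ΔF‖ := by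
      rw [norm_smul, Real.norm_eq_abs, abs_of_pos ha1]
    have h3 : ⟪lam • dt, α (t+1) • ΔF⟫ = lam * (α (t+1) * ⟪dt, ΔF⟫) := by
      rw [real_inner_smul_left, real_inner_smul_right]
    have h4 : ‖ΔF‖ ≤ L * ‖dt‖ := hlip _ _
    have hnorm : ‖lam • dt - α (t+1) • ΔF‖^2 ≤ (lam^2 + (α (t+1))^2 * L^2) * ‖dt‖^2 := by
      rw [norm_sub_sq_real, h1, h2, h3]
      nlinarith [norm_nonneg ΔF, norm_nonneg dt, mul_nonneg (mul_nonneg hlam0 ha1.le) hF,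
        mul_le_mul h4 h4 (norm_nonneg ΔF) (by positivity : (0:ℝ) ≤ L*‖dt‖), sq_nonneg (α (t+1))]
    calc ‖lam • dt - α (t+1) • ΔF‖ = Real.sqrt (‖lam • dt - α (t+1) • ΔF‖^2) :=
          (Real.sqrt_sq (norm_nonneg _)).symm
      _ ≤ Real.sqrt ((lam^2 + (α (t+1))^2 * L^2) * ‖dt‖^2) := Real.sqrt_le_sqrt hnorm
      _ = Real.sqrt (lam^2 + (α (t+1))^2 * L^2) * ‖dt‖ := by
          rw [Real.sqrt_mul (by positivity), Real.sqrt_sq (norm_nonneg _)]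
  have hmain : ‖d'‖^2 ≤ (Real.sqrt (lam^2 + (α (t+1))^2 * L^2) * ‖dt‖ + |eps| * D) * ‖d'‖ := by
    have h0 : ⟪d', d'⟫ ≤ ⟪d' + α (t+1) • (c2 - c1), d'⟫ := by
      rw [inner_add_left, real_inner_smul_left]
      nlinarith [mul_nonneg ha1.le hmonoA]
    have h1 : ⟪d' + α (t+1) • (c2 - c1), d'⟫
        = ⟪lam • dt - α (t+1) • ΔF, d'⟫ + eps * ⟪z 0 - z t, d'⟫ := by
      rw [hexp, inner_add_left, real_inner_smul_left]
    have h2 : ⟪lam • dt - α (t+1) • ΔF, d'⟫ ≤ ‖lam • dt - α (t+1) • ΔF‖ * ‖d'‖ :=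
      real_inner_le_norm _ _
    have h3 : eps * ⟪z 0 - z t, d'⟫ ≤ |eps| * (D * ‖d'‖) := by
      calc eps * ⟪z 0 - z t, d'⟫ ≤ |eps * ⟪z 0 - z t, d'⟫| := le_abs_self _
        _ = |eps| * |⟪z 0 - z t, d'⟫| := abs_mul _ _
        _ ≤ |eps| * (‖z 0 - z t‖ * ‖d'‖) :=
            mul_le_mul_of_nonneg_left (abs_real_inner_le_norm _ _) (abs_nonneg _)
        _ ≤ |eps| * (D * ‖d'‖) := by
            gcongr
            exact hD t
    have h5 : ⟪d', d'⟫ = ‖d'‖^2 := real_inner_self_eq_norm_sq d'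
    nlinarith [mul_le_mul_of_nonneg_right hq (norm_nonneg d')]
  rcases eq_or_lt_of_le (norm_nonneg d') with h | h
  · rw [← h]
    exact add_nonneg (mul_nonneg (Real.sqrt_nonneg _) (norm_nonneg _))
      (mul_nonneg (abs_nonneg _) hD0)
  · have : ‖d'‖ * ‖d'‖ ≤ (Real.sqrt (lam^2 + (α (t+1))^2 * L^2) * ‖dt‖ + |eps| * D) * ‖d'‖ := by
      nlinarith [hmain]
    exact le_of_mul_le_mul_right this h
end

section
/- (Residual from difference decay) Suppose F is L-Lipschitz, the P-AGD recursion z_{t+1} − z_t = β_t(z_0 − z_t) − α_t(F(z_t) + c_{t+1}) holds with c_{t+1} ∈ A(z_{t+1}), ‖z_{t+1} − z_t‖ ≤ E/(t+γ), and ‖z_0 − z_t‖ ≤ D for all t, where α_t = 1/(L√(t+γ)) and β_t = γ/(t+γ). Then for every T ≥ 1, ‖F(z_T) + c_T‖ ≤ L(2E + γD)/√(T−1+γ). -/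
open RealInnerProductSpace

/-! Solving the step at `t = T - 1` for `F z_{T-1} + c_T` and inserting
`F z_T - F z_{T-1}` bounds the residual by `L‖d‖ + α⁻¹(β‖z₀ - z_{T-1}‖ + ‖d‖)`, where
`d = z_T - z_{T-1}`. With `α⁻¹ = L√s`, `β = γ/s` and `‖d‖ ≤ E/s` for `s = T - 1 + γ ≥ 1`,
each of the three terms is at most a multiple of `L/√s`. -/

theorem norm_residual_le_of_step {V : Type*} [NormedAddCommGroup V] [NormedSpace ℝ V]
    {F : V → V} {L α β : ℝ} (hlip : ∀ x y, ‖F x - F y‖ ≤ L * ‖x - y‖)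
    (hα : 0 < α) (hβ : 0 ≤ β) {z₀ z z' c : V}
    (hstep : z' - z = β • (z₀ - z) - α • (F z + c)) :
    ‖F z' + c‖ ≤ L * ‖z' - z‖ + α⁻¹ * (β * ‖z₀ - z‖ + ‖z' - z‖) := by
  have hres : F z + c = α⁻¹ • (β • (z₀ - z) - (z' - z)) := by
    rw [hstep, sub_sub_cancel, smul_smul, inv_mul_cancel₀ hα.ne', one_smul]
  calc ‖F z' + c‖ = ‖(F z' - F z) + (F z + c)‖ := by congr 1; abel
    _ ≤ ‖F z' - F z‖ + ‖F z + c‖ := norm_add_le _ _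
    _ ≤ L * ‖z' - z‖ + α⁻¹ * (β * ‖z₀ - z‖ + ‖z' - z‖) := by
      gcongr
      · exact hlip _ _
      · rw [hres, norm_smul, Real.norm_of_nonneg (inv_nonneg.mpr hα.le)]
        gcongr
        refine (norm_sub_le _ _).trans ?_
        rw [norm_smul, Real.norm_of_nonneg hβ]

theorem add_mul_sqrt_le_div_sqrt {L γ D E s a b : ℝ} (hL : 0 ≤ L) (hγ : 0 ≤ γ) (hs : 1 ≤ s)
    (ha₀ : 0 ≤ a) (ha : a ≤ E / s) (hb : b ≤ D) :
    L * a + L * √s * (γ / s * b + a) ≤ L * (2 * E + γ * D) / √s := by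
  set r := √s
  have hr : 1 ≤ r := Real.one_le_sqrt.mpr hs
  have hs_eq : s = r * r := (Real.mul_self_sqrt (by linarith)).symm
  rw [hs_eq] at ha ⊢
  have hE : 0 ≤ E := le_trans (by positivity) ((le_div_iff₀ (by positivity)).mp ha)
  have ha' : a ≤ E / r := ha.trans (div_le_div_of_nonneg_left hE (by positivity) (by nlinarith))
  calc L * a + L * r * (γ / (r * r) * b + a) = L * a + L * r * a + L * γ * b / r := by
        field_simp
        ring
    _ ≤ L * (E / r) + L * r * (E / (r * r)) + L * γ * D / r := by gcongr
    _ = L * (2 * E + γ * D) / r := by field_simp; ring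

theorem residual_from_decay_general {d : ℕ}
    (F : EuclideanSpace ℝ (Fin d) → EuclideanSpace ℝ (Fin d))
    (L γ D E : ℝ) (hL : 0 < L) (hγ : 2 ≤ γ)
    (hlip : ∀ z w, ‖F z - F w‖ ≤ L * ‖z - w‖)
    (α β : ℕ → ℝ)
    (hα : ∀ t : ℕ, α t = 1 / (L * Real.sqrt ((t : ℝ) + γ)))
    (hβ : ∀ t : ℕ, β t = γ / ((t : ℝ) + γ))
    (z c : ℕ → EuclideanSpace ℝ (Fin d))
    (hrec : ∀ t : ℕ, z (t + 1) - z t =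
      β t • (z 0 - z t) - α t • (F (z t) + c (t + 1)))
    (hd : ∀ t : ℕ, ‖z (t + 1) - z t‖ ≤ E / ((t : ℝ) + γ))
    (hD : ∀ t : ℕ, ‖z 0 - z t‖ ≤ D) :
    ∀ T : ℕ, 1 ≤ T →
      ‖F (z T) + c T‖ ≤ L * (2 * E + γ * D) / Real.sqrt ((T : ℝ) - 1 + γ) := by
  intro T hT
  obtain ⟨t, rfl⟩ := Nat.exists_eq_add_of_le' hT
  have hs : 1 ≤ (t : ℝ) + γ := by linarith [t.cast_nonneg (α := ℝ)]
  have hα_pos : 0 < α t := by rw [hα t]; positivity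
  have hβ_nonneg : 0 ≤ β t := by rw [hβ t]; positivity
  have hα_inv : (α t)⁻¹ = L * √((t : ℝ) + γ) := by rw [hα t, one_div, inv_inv]
  have hT_sub : ((t + 1 : ℕ) : ℝ) - 1 + γ = t + γ := by push_cast; ring
  rw [hT_sub]
  refine (norm_residual_le_of_step hlip hα_pos hβ_nonneg (hrec t)).trans ?_
  rw [hα_inv, hβ t]
  exact add_mul_sqrt_le_div_sqrt hL.le (by linarith) hs (norm_nonneg _) (hd t) (hD t)

/-- Residual from difference decay: if `F` is `L`-Lipschitz, the P-AGD
recursion `z_{t+1} − z_t = β_t(z₀ − z_t) − α_t(F z_t + c_{t+1})` holds with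
`c_{t+1} ∈ A z_{t+1}`, `‖z_{t+1} − z_t‖ ≤ E/(t+γ)` and `‖z₀ − z_t‖ ≤ D`,
where `α_t = 1/(L√(t+γ))` and `β_t = γ/(t+γ)`, then for every `T ≥ 1`,
`‖F z_T + c_T‖ ≤ L(2E + γD)/√(T−1+γ)`. -/
theorem residual_from_decay {d : ℕ}
    (F : EuclideanSpace ℝ (Fin d) → EuclideanSpace ℝ (Fin d))
    (A : EuclideanSpace ℝ (Fin d) → Set (EuclideanSpace ℝ (Fin d)))
    (hA : IsMaximallyMonotone A)
    (L γ D E : ℝ) (hL : 0 < L) (hγ : 2 ≤ γ)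
    (hlip : ∀ z w, ‖F z - F w‖ ≤ L * ‖z - w‖)
    (α β : ℕ → ℝ)
    (hα : ∀ t : ℕ, α t = 1 / (L * Real.sqrt ((t : ℝ) + γ)))
    (hβ : ∀ t : ℕ, β t = γ / ((t : ℝ) + γ))
    (z c : ℕ → EuclideanSpace ℝ (Fin d))
    (hc : ∀ t : ℕ, c (t + 1) ∈ A (z (t + 1)))
    (hrec : ∀ t : ℕ, z (t + 1) - z t =
      β t • (z 0 - z t) - α t • (F (z t) + c (t + 1)))
    (hd : ∀ t : ℕ, ‖z (t + 1) - z t‖ ≤ E / ((t : ℝ) + γ))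
    (hD : ∀ t : ℕ, ‖z 0 - z t‖ ≤ D) :
    ∀ T : ℕ, 1 ≤ T →
      ‖F (z T) + c T‖ ≤ L * (2 * E + γ * D) / Real.sqrt ((T : ℝ) - 1 + γ) :=
  residual_from_decay_general F L γ D E hL hγ hlip α β hα hβ z c hrec hd hD
end
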